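/- arXiv:2005.10495 — 2 statements merged into one kernel-verified Lean document; each statement's English description precedes it below -/
import Mathlib

section
/- Consider the rescaled distributed Nash equilibrium seeking dynamics over a strongly connected digraph: Z : [0, ∞) → ℝ^{N×N} is differentiable and satisfies, for all t ≥ 0, Ż(t) = −α Λ L Z(t) − diag(𝐅(Z(t))), where Λ = diag(w_1, …, w_N) with w_i > 0 for all i. Assume: (i) F is l̲-strongly monotone and l̄-Lipschitz with l̲, l̄ > 0; (ii) 𝐅 is l_F-Lipschitz with l_F > 0, and set l = max(l̄, l_F); (iii) L is the Laplacian of a strongly connected digraph and the rescaled matrix Λ L is weight-balanced, i.e., 1ᵀ Λ L = 0; (iv) λ₂′ > 0 satisfies xᵀ Sym(Λ L) x ≥ λ₂′ ‖x‖² for all x ∈ ℝ^N with 1ᵀx = 0, where Sym(M) = (M + Mᵀ)/2; (v) z* ∈ ℝ^N satisfies F(z*) = 0; (vi) α > (1/λ₂′)(l²/l̲ + l). Then there exist constants κ > 0 and ν > 0, independent of the initial condition, such that for all t ≥ 0, ‖Z(t) − 1 (z*)ᵀ‖ ≤ κ e^{−ν t} ‖Z(0) − 1 (z*)ᵀ‖;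 in particular every row Zⁱ(t) converges exponentially to z* as t → ∞. -/
open scoped BigOperators

/-- Euclidean norm of a vector in `ℝ^N`. -/
noncomputable def vnorm {N : ℕ} (x : Fin N → ℝ) : ℝ := Real.sqrt (∑ i, (x i) ^ 2)

/-- Frobenius norm of a matrix in `ℝ^{N×N}`. -/
noncomputable def mnorm {N : ℕ} (A : Matrix (Fin N) (Fin N) ℝ) : ℝ :=
  Real.sqrt (∑ i, ∑ j, (A i j) ^ 2)

/-!
The Lyapunov function is `V = ‖Z - 1 z*ᵀ‖²`. Split `Z - 1 z*ᵀ` into the mean part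
`1 (ȳ - z*)ᵀ`, where `ȳ` is the vector of column means, and the disagreement `P = Z - 1 ȳᵀ`,
whose columns sum to zero, so that `V = N ‖ȳ - z*‖² + ‖P‖²`. In `V'/2` the consensus term only
sees `P` (`L 1 = 0`, and `1ᵀ Λ L = 0` removes the mean), so it is at most `-α λ₂′ ‖P‖²`;
strong monotonicity of `F` at `ȳ` and the Lipschitz bounds control the pseudogradient term.
Altogether `V'/2 ≤ -Q(‖ȳ - z*‖, ‖P‖)` for the quadratic form
`Q(x, y) = l̲ x² - 2 l x y + (α λ₂′ - l) y²`, which the gain condition makes positive definite.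
Hence `V' ≤ -(2ε/N) V`, and Grönwall's inequality gives the rate `ν = ε / N` with `κ = 1`.
-/

open Finset

lemma vnorm_nonneg {N : ℕ} (x : Fin N → ℝ) : 0 ≤ vnorm x := Real.sqrt_nonneg _

lemma mnorm_nonneg {N : ℕ} (A : Matrix (Fin N) (Fin N) ℝ) : 0 ≤ mnorm A := Real.sqrt_nonneg _

lemma vnorm_sq {N : ℕ} (x : Fin N → ℝ) : vnorm x ^ 2 = ∑ i, x i ^ 2 :=
  Real.sq_sqrt (by positivity)

lemma mnorm_sq {N : ℕ} (A : Matrix (Fin N) (Fin N) ℝ) : mnorm A ^ 2 = ∑ i, ∑ j, A i j ^ 2 :=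
  Real.sq_sqrt (by positivity)

lemma abs_sum_mul_le_vnorm_mul_vnorm {N : ℕ} (x y : Fin N → ℝ) :
    |∑ i, x i * y i| ≤ vnorm x * vnorm y := by
  rw [← Real.sqrt_sq_eq_abs, vnorm, vnorm, ← Real.sqrt_mul (by positivity)]
  exact Real.sqrt_le_sqrt (sum_mul_sq_le_sq_mul_sq _ x y)

lemma vnorm_diag_le_mnorm {N : ℕ} (A : Matrix (Fin N) (Fin N) ℝ) :
    vnorm (fun i => A i i) ≤ mnorm A :=
  Real.sqrt_le_sqrt <| sum_le_sum fun i _ =>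
    single_le_sum (f := fun j => A i j ^ 2) (fun _ _ => sq_nonneg _) (mem_univ i)

lemma laplacian_sum_row_eq_zero {N : ℕ} {a : Fin N → Fin N → ℝ} {L : Matrix (Fin N) (Fin N) ℝ}
    (ha_diag : ∀ i, a i i = 0) (hLdef : ∀ i j, L i j = if i = j then ∑ k, a i k else -(a i j))
    (i : Fin N) : ∑ k, L i k = 0 := by
  have hL : ∀ k, L i k = (if i = k then ∑ k', a i k' else 0) - a i k := by
    intro k
    rw [hLdef]
    split_ifs with h
    · simp [h, ha_diag]
    · ring
  simp [hL, sum_sub_distrib]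

theorem le_mul_exp_of_hasDerivAt_le_neg_mul {V V' : ℝ → ℝ} {c : ℝ}
    (hV : ∀ s ≥ 0, HasDerivAt V (V' s) s) (hle : ∀ s ≥ 0, V' s ≤ -c * V s) :
    ∀ t ≥ 0, V t ≤ V 0 * Real.exp (-c * t) := by
  intro t ht
  have h := le_gronwallBound_of_liminf_deriv_right_le (f := V) (f' := V') (δ := V 0) (K := -c)
    (ε := 0) (a := 0) (b := t)
    (fun s hs => (hV s hs.1).continuousAt.continuousWithinAt)
    (fun s hs _ hr => (hV s hs.1).hasDerivWithinAt.liminf_right_slope_le hr)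
    le_rfl (fun s hs => by simpa using hle s hs.1) t ⟨ht, le_rfl⟩
  simpa [gronwallBound_ε0] using h

lemma exists_pos_mul_sq_add_sq_le {a b l : ℝ} (ha : 0 < a) (hl : l ^ 2 < a * b) :
    ∃ ε > 0, ∀ x y : ℝ, ε * (x ^ 2 + y ^ 2) ≤ a * x ^ 2 - 2 * l * x * y + b * y ^ 2 := by
  have hb : 0 < b := pos_of_mul_pos_right ((sq_nonneg l).trans_lt hl) ha.le
  have hab : 0 < a + b := by positivity
  set ε := (a * b - l ^ 2) / (a + b)
  have hε : ε * (a + b) = a * b - l ^ 2 := div_mul_cancel₀ _ hab.ne'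
  have ha' : 0 < a - ε := by nlinarith
  have hdet : l ^ 2 ≤ (a - ε) * (b - ε) := by nlinarith [sq_nonneg ε]
  refine ⟨ε, div_pos (by linarith) hab, fun x y => ?_⟩
  -- `(a - ε) · Q = ((a - ε) x - l y)² + ((a - ε)(b - ε) - l²) y²` for the remaining form `Q`
  have hQ : 0 ≤ (a - ε) * ((a - ε) * x ^ 2 - 2 * l * x * y + (b - ε) * y ^ 2) := by
    nlinarith [sq_nonneg ((a - ε) * x - l * y), mul_nonneg (sub_nonneg.2 hdet) (sq_nonneg y)]
  nlinarith [nonneg_of_mul_nonneg_right hQ ha']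

section Consensus

variable {N : ℕ}

noncomputable def colMean (A : Matrix (Fin N) (Fin N) ℝ) : Fin N → ℝ :=
  fun j => (∑ i, A i j) / N

noncomputable def disagreement (A : Matrix (Fin N) (Fin N) ℝ) : Matrix (Fin N) (Fin N) ℝ :=
  Matrix.of fun i j => A i j - colMean A j

lemma sum_disagreement_col_eq_zero (A : Matrix (Fin N) (Fin N) ℝ) (j : Fin N) :
    ∑ i, disagreement A i j = 0 := by
  have hN : (N : ℝ) ≠ 0 := by exact_mod_cast j.pos.ne'
  simp [disagreement, colMean, sum_sub_distrib, mul_div_cancel₀ _ hN]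

lemma sum_sq_sub_eq_mean_add_disagreement (A : Matrix (Fin N) (Fin N) ℝ) (z : Fin N → ℝ) :
    ∑ i, ∑ j, (A i j - z j) ^ 2 =
      N * vnorm (colMean A - z) ^ 2 + mnorm (disagreement A) ^ 2 := by
  set m := colMean A - z
  set P := disagreement A
  have hcross : ∑ i, ∑ j, m j * P i j = 0 := by
    rw [sum_comm]
    simp [← mul_sum, P, sum_disagreement_col_eq_zero]
  have hsplit : ∀ i j, A i j - z j = P i j + m j := by
    intro i j
    simp [P, m, disagreement]
  calc ∑ i, ∑ j, (A i j - z j) ^ 2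
      = ∑ i, ∑ j, (P i j ^ 2 + 2 * (m j * P i j) + m j ^ 2) := by
        simp only [hsplit]
        congr! 2 with i _ j _
        ring
    _ = N * vnorm m ^ 2 + mnorm P ^ 2 := by
        simp only [sum_add_distrib, ← mul_sum, hcross, vnorm_sq, mnorm_sq, sum_const,
          card_univ, Fintype.card_fin, nsmul_eq_mul]
        ring

variable {L : Matrix (Fin N) (Fin N) ℝ} {w : Fin N → ℝ}

lemma sum_laplacian_mul_eq_disagreement (hLrow : ∀ i, ∑ k, L i k = 0)
    (A : Matrix (Fin N) (Fin N) ℝ) (i j : Fin N) :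
    ∑ k, L i k * A k j = ∑ k, L i k * disagreement A k j := by
  simp [disagreement, mul_sub, sum_sub_distrib, ← sum_mul, hLrow]

lemma sum_mul_sum_laplacian_eq_zero (hbal : ∀ j, ∑ i, w i * L i j = 0) (y : Fin N → ℝ) :
    ∑ i, w i * ∑ k, L i k * y k = 0 := by
  simp_rw [mul_sum, ← mul_assoc]
  rw [sum_comm]
  simp [← sum_mul, hbal]

lemma sum_mul_symm_mul (B : Fin N → Fin N → ℝ) (x : Fin N → ℝ) :
    ∑ i, ∑ j, x i * ((B i j + B j i) / 2) * x j = ∑ i, x i * ∑ j, B i j * x j := by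
  have hswap : ∑ i, ∑ j, x i * B j i * x j = ∑ i, ∑ j, x i * B i j * x j := by
    rw [sum_comm]
    congr! 2 with i _ j _
    ring
  calc ∑ i, ∑ j, x i * ((B i j + B j i) / 2) * x j
      = (∑ i, ∑ j, x i * B i j * x j + ∑ i, ∑ j, x i * B j i * x j) / 2 := by
        simp only [← sum_add_distrib, sum_div]
        congr! 2 with i _ j _
        ring
    _ = ∑ i, x i * ∑ j, B i j * x j := by
        rw [hswap, ← two_mul, mul_div_cancel_left₀ _ two_ne_zero]
        simp only [mul_sum]
        congr! 2 with i _ j _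
        ring

lemma mul_mnorm_disagreement_sq_le_sum_mul_laplacian {lam : ℝ} (hLrow : ∀ i, ∑ k, L i k = 0)
    (hbal : ∀ j, ∑ i, w i * L i j = 0)
    (hlam : ∀ x : Fin N → ℝ, ∑ i, x i = 0 →
      lam * vnorm x ^ 2 ≤ ∑ i, ∑ j, x i * ((w i * L i j + w j * L j i) / 2) * x j)
    (A : Matrix (Fin N) (Fin N) ℝ) (z : Fin N → ℝ) :
    lam * mnorm (disagreement A) ^ 2 ≤
      ∑ i, ∑ j, (A i j - z j) * (w i * ∑ k, L i k * A k j) := by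
  set P := disagreement A
  have hcol : ∀ j, ∑ i, (A i j - z j) * (w i * ∑ k, L i k * A k j) =
      ∑ i, P i j * (w i * ∑ k, L i k * P k j) := by
    intro j
    have hsplit : ∀ i, A i j - z j = P i j + (colMean A j - z j) := by
      intro i
      simp [P, disagreement]
    simp only [hsplit, sum_laplacian_mul_eq_disagreement hLrow A _ j, add_mul, sum_add_distrib,
      ← mul_sum, sum_mul_sum_laplacian_eq_zero hbal, mul_zero, add_zero, P]
  rw [sum_comm, mnorm_sq, sum_comm, mul_sum]
  refine sum_le_sum fun j _ => ?_
  have h := hlam (fun i => P i j) (sum_disagreement_col_eq_zero A j)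
  rw [vnorm_sq, sum_mul_symm_mul (fun i k => w i * L i k)] at h
  rw [hcol]
  simpa only [mul_assoc, mul_sum] using h

end Consensus

section Gradient

variable {N : ℕ} {F : (Fin N → ℝ) → (Fin N → ℝ)} {bF : Matrix (Fin N) (Fin N) ℝ → (Fin N → ℝ)}
  {lunder lbar lF : ℝ} {z : Fin N → ℝ}

lemma le_sum_diag_sub_mul_pseudogradient (hbF : ∀ Z i, bF Z i = F (Z i) i)
    (hmono : ∀ x y : Fin N → ℝ,
      lunder * (vnorm (x - y)) ^ 2 ≤ ∑ i, (F x i - F y i) * (x i - y i))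
    (hFlip : ∀ x y : Fin N → ℝ, vnorm (F x - F y) ≤ lbar * vnorm (x - y))
    (hbFlip : ∀ Z W : Matrix (Fin N) (Fin N) ℝ, vnorm (bF Z - bF W) ≤ lF * mnorm (Z - W))
    (hz : F z = 0) (A : Matrix (Fin N) (Fin N) ℝ) :
    lunder * vnorm (colMean A - z) ^ 2
        - (lbar + lF) * (vnorm (colMean A - z) * mnorm (disagreement A))
        - lF * mnorm (disagreement A) ^ 2 ≤ ∑ i, (A i i - z i) * bF A i := by
  set y := colMean A
  set m := y - z
  set P := disagreement A
  set e := bF A - F y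
  have hM := vnorm_nonneg m
  have hq := mnorm_nonneg P
  have he : vnorm e ≤ lF * mnorm P := by
    have hconst : bF (Matrix.of fun _ j => y j) = F y := funext fun i => hbF _ i
    have hdiff : A - Matrix.of (fun _ j => y j) = P := rfl
    simpa only [hconst, hdiff] using hbFlip A (Matrix.of fun _ j => y j)
  have hFy : vnorm (F y) ≤ lbar * vnorm m := by
    simpa only [hz, sub_zero] using hFlip y z
  have hmono' : lunder * vnorm m ^ 2 ≤ ∑ i, F y i * m i := by
    simpa only [hz, Pi.zero_apply, sub_zero, m, Pi.sub_apply] using hmono y z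
  have hdiag := vnorm_diag_le_mnorm P
  have hsplit : ∑ i, (A i i - z i) * bF A i = ∑ i, F y i * m i + ∑ i, m i * e i
      + ∑ i, P i i * F y i + ∑ i, P i i * e i := by
    simp only [← sum_add_distrib]
    refine sum_congr rfl fun i _ => ?_
    have hA : A i i - z i = P i i + m i := by simp [P, m, y, disagreement]
    have hb : bF A i = F y i + e i := by simp [e]
    rw [hA, hb]
    ring
  have hme := (abs_sum_mul_le_vnorm_mul_vnorm m e).trans (mul_le_mul_of_nonneg_left he hM)
  have hPF := (abs_sum_mul_le_vnorm_mul_vnorm (fun i => P i i) (F y)).trans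
    (mul_le_mul hdiag hFy (vnorm_nonneg _) hq)
  have hPe := (abs_sum_mul_le_vnorm_mul_vnorm (fun i => P i i) e).trans
    (mul_le_mul hdiag he (vnorm_nonneg _) hq)
  rw [hsplit]
  linarith [neg_abs_le (∑ i, m i * e i), neg_abs_le (∑ i, P i i * F y i),
    neg_abs_le (∑ i, P i i * e i)]

end Gradient

section Flow

variable {N : ℕ}

def nashSeekingField (α : ℝ) (w : Fin N → ℝ) (L : Matrix (Fin N) (Fin N) ℝ)
    (bF : Matrix (Fin N) (Fin N) ℝ → (Fin N → ℝ)) (A : Matrix (Fin N) (Fin N) ℝ) :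
    Matrix (Fin N) (Fin N) ℝ :=
  Matrix.of fun i j => -α * (w i * ∑ k, L i k * A k j) - (if i = j then bF A i else 0)

lemma sum_mul_nashSeekingField (α : ℝ) (w : Fin N → ℝ) (L : Matrix (Fin N) (Fin N) ℝ)
    (bF : Matrix (Fin N) (Fin N) ℝ → (Fin N → ℝ)) (A : Matrix (Fin N) (Fin N) ℝ)
    (z : Fin N → ℝ) :
    ∑ i, ∑ j, (A i j - z j) * nashSeekingField α w L bF A i j =
      -α * ∑ i, ∑ j, (A i j - z j) * (w i * ∑ k, L i k * A k j)
        - ∑ i, (A i i - z i) * bF A i := by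
  have hdiag : ∀ i, ∑ j, (A i j - z j) * (if i = j then bF A i else 0) =
      (A i i - z i) * bF A i := by
    simp [mul_ite]
  simp only [nashSeekingField, Matrix.of_apply, mul_sub, sum_sub_distrib, hdiag, mul_sum]
  congr! 4 with i _ j _ k _
  ring

lemma sum_mul_nashSeekingField_le (hN : 1 ≤ N) {α lam lunder lbar lF ε : ℝ}
    {w : Fin N → ℝ} {L : Matrix (Fin N) (Fin N) ℝ} {F : (Fin N → ℝ) → (Fin N → ℝ)}
    {bF : Matrix (Fin N) (Fin N) ℝ → (Fin N → ℝ)} {z : Fin N → ℝ}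
    (hLrow : ∀ i, ∑ k, L i k = 0) (hbal : ∀ j, ∑ i, w i * L i j = 0)
    (hlam : ∀ x : Fin N → ℝ, ∑ i, x i = 0 →
      lam * vnorm x ^ 2 ≤ ∑ i, ∑ j, x i * ((w i * L i j + w j * L j i) / 2) * x j)
    (hbF : ∀ Z i, bF Z i = F (Z i) i)
    (hmono : ∀ x y : Fin N → ℝ,
      lunder * (vnorm (x - y)) ^ 2 ≤ ∑ i, (F x i - F y i) * (x i - y i))
    (hFlip : ∀ x y : Fin N → ℝ, vnorm (F x - F y) ≤ lbar * vnorm (x - y))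
    (hbFlip : ∀ Z W : Matrix (Fin N) (Fin N) ℝ, vnorm (bF Z - bF W) ≤ lF * mnorm (Z - W))
    (hz : F z = 0) (hα : 0 ≤ α) (hε : 0 ≤ ε)
    (hquad : ∀ x y : ℝ, ε * (x ^ 2 + y ^ 2) ≤
      lunder * x ^ 2 - 2 * max lbar lF * x * y + (α * lam - max lbar lF) * y ^ 2)
    (A : Matrix (Fin N) (Fin N) ℝ) :
    ∑ i, ∑ j, (A i j - z j) * nashSeekingField α w L bF A i j ≤
      -(ε / N) * ∑ i, ∑ j, (A i j - z j) ^ 2 := by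
  set M := vnorm (colMean A - z)
  set q := mnorm (disagreement A)
  have hMq : 0 ≤ M * q := mul_nonneg (vnorm_nonneg _) (mnorm_nonneg _)
  have hcons := mul_le_mul_of_nonneg_left
    (mul_mnorm_disagreement_sq_le_sum_mul_laplacian hLrow hbal hlam A z) hα
  have hgrad := le_sum_diag_sub_mul_pseudogradient hbF hmono hFlip hbFlip hz A
  have hlbar_le := mul_le_mul_of_nonneg_right (le_max_left lbar lF) hMq
  have hlF_le := mul_le_mul_of_nonneg_right (le_max_right lbar lF) hMq
  have hlF_le' := mul_le_mul_of_nonneg_right (le_max_right lbar lF) (sq_nonneg q)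
  have hN' : (1 : ℝ) ≤ N := by exact_mod_cast hN
  have hεN : ε / N * q ^ 2 ≤ ε * q ^ 2 :=
    mul_le_mul_of_nonneg_right (div_le_self hε hN') (sq_nonneg q)
  have hquadMq := hquad M q
  have hrhs : -(ε / N) * (N * M ^ 2 + q ^ 2) = -ε * M ^ 2 - ε / N * q ^ 2 := by
    field_simp
    ring
  rw [sum_mul_nashSeekingField, sum_sq_sub_eq_mean_add_disagreement, hrhs]
  linarith

theorem mnorm_sub_le_exp_mul_of_lyapunov {Φ : Matrix (Fin N) (Fin N) ℝ → Matrix (Fin N) (Fin N) ℝ}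
    {z : Fin N → ℝ} {c : ℝ}
    (hΦ : ∀ A, ∑ i, ∑ j, (A i j - z j) * Φ A i j ≤ -c * ∑ i, ∑ j, (A i j - z j) ^ 2)
    {Z : ℝ → Matrix (Fin N) (Fin N) ℝ}
    (hZ : ∀ t ≥ (0 : ℝ), ∀ i j, HasDerivAt (fun s => Z s i j) (Φ (Z t) i j) t) (t : ℝ)
    (ht : 0 ≤ t) :
    mnorm (Z t - Matrix.of fun _ j => z j) ≤
      Real.exp (-c * t) * mnorm (Z 0 - Matrix.of fun _ j => z j) := by
  have hV : ∀ s ≥ 0, HasDerivAt (fun s => ∑ i, ∑ j, (Z s i j - z j) ^ 2)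
      (∑ i, ∑ j, 2 * (Z s i j - z j) * Φ (Z s) i j) s := by
    intro s hs
    refine HasDerivAt.fun_sum fun i _ => HasDerivAt.fun_sum fun j _ => ?_
    refine (((hZ s hs i j).sub_const (z j)).fun_pow 2).congr_deriv ?_
    norm_num
  have hdecay := le_mul_exp_of_hasDerivAt_le_neg_mul (c := 2 * c) hV
    (fun s _ => by
      have := hΦ (Z s)
      simp only [mul_assoc, ← mul_sum]
      linarith) t ht
  have hexp : Real.exp (-(2 * c) * t) = Real.exp (-c * t) ^ 2 := by
    rw [← Real.exp_nat_mul]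
    congr 1
    push_cast
    ring
  calc mnorm (Z t - Matrix.of fun _ j => z j)
      = Real.sqrt (∑ i, ∑ j, (Z t i j - z j) ^ 2) := by simp [mnorm]
    _ ≤ Real.sqrt ((∑ i, ∑ j, (Z 0 i j - z j) ^ 2) * Real.exp (-(2 * c) * t)) :=
      Real.sqrt_le_sqrt hdecay
    _ = Real.exp (-c * t) * mnorm (Z 0 - Matrix.of fun _ j => z j) := by
      rw [hexp, Real.sqrt_mul' _ (sq_nonneg _), Real.sqrt_sq (Real.exp_nonneg _), mul_comm]
      simp [mnorm]

end Flow

theorem nash_seeking_rescaled_general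
    (N : ℕ) (hN : 1 ≤ N)
    -- the weighted digraph and its Laplacian
    (a : Fin N → Fin N → ℝ) (L : Matrix (Fin N) (Fin N) ℝ)
    (ha_diag : ∀ i, a i i = 0)
    (hLdef : ∀ i j, L i j = if i = j then ∑ k, a i k else -(a i j))
    -- the positive rescaling Λ = diag(w₁, …, w_N)
    (w : Fin N → ℝ)
    -- (iii) Λ L is weight-balanced: 1ᵀ Λ L = 0
    (hbal : ∀ j, ∑ i, w i * L i j = 0)
    -- pseudogradient `F` and extended pseudogradient `𝐅` (row-wise evaluation)
    (F : (Fin N → ℝ) → (Fin N → ℝ)) (bF : Matrix (Fin N) (Fin N) ℝ → (Fin N → ℝ))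
    (hbF : ∀ Z i, bF Z i = F (Z i) i)
    (lunder lbar lF : ℝ) (hlunder : 0 < lunder) (hlbar : 0 < lbar)
    -- (i) F is l̲-strongly monotone and l̄-Lipschitz
    (hmono : ∀ x y : Fin N → ℝ,
      lunder * (vnorm (x - y)) ^ 2 ≤ ∑ i, (F x i - F y i) * (x i - y i))
    (hFlip : ∀ x y : Fin N → ℝ, vnorm (F x - F y) ≤ lbar * vnorm (x - y))
    -- (ii) 𝐅 is l_F-Lipschitz (Frobenius norm on matrices)
    (hbFlip : ∀ Z W : Matrix (Fin N) (Fin N) ℝ,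
      vnorm (bF Z - bF W) ≤ lF * mnorm (Z - W))
    -- (iv) λ₂′ > 0 with xᵀ Sym(Λ L) x ≥ λ₂′‖x‖² whenever 1ᵀx = 0
    (lam2' : ℝ) (hlam2' : 0 < lam2')
    (hlam2'spec : ∀ x : Fin N → ℝ, (∑ i, x i) = 0 →
      lam2' * (vnorm x) ^ 2 ≤ ∑ i, ∑ j, x i * ((w i * L i j + w j * L j i) / 2) * x j)
    -- (v) z* with F(z*) = 0
    (zstar : Fin N → ℝ) (hzstar : F zstar = 0)
    -- (vi) the gain condition α > (1/λ₂′)(l²/l̲ + l) with l = max(l̄, l_F)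
    (α : ℝ)
    (hα : α > (1 / lam2') * ((max lbar lF) ^ 2 / lunder + max lbar lF)) :
    -- conclusion: uniform exponential convergence of every trajectory to 1 (z*)ᵀ
    ∃ κ > (0:ℝ), ∃ ν > (0:ℝ), ∀ Z : ℝ → Matrix (Fin N) (Fin N) ℝ,
      (∀ t ≥ (0:ℝ), ∀ i j, HasDerivAt (fun s => Z s i j)
          (-α * (w i * ∑ k, L i k * Z t k j) - (if i = j then bF (Z t) i else 0)) t) →
      ∀ t ≥ (0:ℝ),
        mnorm (Z t - Matrix.of (fun _ j => zstar j)) ≤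
          κ * Real.exp (-ν * t) * mnorm (Z 0 - Matrix.of (fun _ j => zstar j)) := by
  have hLrow := laplacian_sum_row_eq_zero ha_diag hLdef
  set l := max lbar lF
  have hl : 0 < l := hlbar.trans_le (le_max_left _ _)
  have hgain : l ^ 2 / lunder + l < α * lam2' := by
    rwa [gt_iff_lt, one_div, inv_mul_lt_iff₀ hlam2', mul_comm] at hα
  have hα0 : 0 ≤ α := by
    have : 0 < α * lam2' := lt_trans (by positivity) hgain
    exact (pos_of_mul_pos_left this hlam2'.le).le
  have hdet : l ^ 2 < lunder * (α * lam2' - l) := by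
    rw [← div_lt_iff₀' hlunder]
    linarith
  obtain ⟨ε, hε, hquad⟩ := exists_pos_mul_sq_add_sq_le hlunder hdet
  have hN0 : (0 : ℝ) < N := by exact_mod_cast hN
  refine ⟨1, one_pos, ε / N, div_pos hε hN0, fun Z hZ t ht => ?_⟩
  rw [one_mul]
  exact mnorm_sub_le_exp_mul_of_lyapunov (Φ := nashSeekingField α w L bF)
    (sum_mul_nashSeekingField_le hN hLrow hbal hlam2'spec hbF hmono hFlip hbFlip hzstar hα0
      hε.le hquad) hZ t ht

/-- Exponential convergence of the rescaled distributed
Nash-equilibrium-seeking dynamics `Ż = −α Λ L Z − diag(𝐅(Z))`, where `Λ = diag(w)`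
with positive weights makes `Λ L` weight-balanced. -/
theorem nash_seeking_rescaled
    (N : ℕ) (hN : 1 ≤ N)
    -- the weighted digraph and its Laplacian
    (a : Fin N → Fin N → ℝ) (L : Matrix (Fin N) (Fin N) ℝ)
    (ha_nonneg : ∀ i j, 0 ≤ a i j) (ha_diag : ∀ i, a i i = 0)
    (hLdef : ∀ i j, L i j = if i = j then ∑ k, a i k else -(a i j))
    -- strongly connected (irreducible adjacency matrix)
    (hconn : ∀ S : Finset (Fin N), S.Nonempty → S ≠ Finset.univ →
      ∃ i ∈ S, ∃ j, j ∉ S ∧ 0 < a i j)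
    -- the positive rescaling Λ = diag(w₁, …, w_N)
    (w : Fin N → ℝ) (hw : ∀ i, 0 < w i)
    -- (iii) Λ L is weight-balanced: 1ᵀ Λ L = 0
    (hbal : ∀ j, ∑ i, w i * L i j = 0)
    -- pseudogradient `F` and extended pseudogradient `𝐅` (row-wise evaluation)
    (F : (Fin N → ℝ) → (Fin N → ℝ)) (bF : Matrix (Fin N) (Fin N) ℝ → (Fin N → ℝ))
    (hbF : ∀ Z i, bF Z i = F (Z i) i)
    (lunder lbar lF : ℝ) (hlunder : 0 < lunder) (hlbar : 0 < lbar) (hlF : 0 < lF)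
    -- (i) F is l̲-strongly monotone and l̄-Lipschitz
    (hmono : ∀ x y : Fin N → ℝ,
      lunder * (vnorm (x - y)) ^ 2 ≤ ∑ i, (F x i - F y i) * (x i - y i))
    (hFlip : ∀ x y : Fin N → ℝ, vnorm (F x - F y) ≤ lbar * vnorm (x - y))
    -- (ii) 𝐅 is l_F-Lipschitz (Frobenius norm on matrices)
    (hbFlip : ∀ Z W : Matrix (Fin N) (Fin N) ℝ,
      vnorm (bF Z - bF W) ≤ lF * mnorm (Z - W))
    -- (iv) λ₂′ > 0 with xᵀ Sym(Λ L) x ≥ λ₂′‖x‖² whenever 1ᵀx = 0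
    (lam2' : ℝ) (hlam2' : 0 < lam2')
    (hlam2'spec : ∀ x : Fin N → ℝ, (∑ i, x i) = 0 →
      lam2' * (vnorm x) ^ 2 ≤ ∑ i, ∑ j, x i * ((w i * L i j + w j * L j i) / 2) * x j)
    -- (v) z* with F(z*) = 0
    (zstar : Fin N → ℝ) (hzstar : F zstar = 0)
    -- (vi) the gain condition α > (1/λ₂′)(l²/l̲ + l) with l = max(l̄, l_F)
    (α : ℝ)
    (hα : α > (1 / lam2') * ((max lbar lF) ^ 2 / lunder + max lbar lF)) :
    -- conclusion: uniform exponential convergence of every trajectory to 1 (z*)ᵀ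
    ∃ κ > (0:ℝ), ∃ ν > (0:ℝ), ∀ Z : ℝ → Matrix (Fin N) (Fin N) ℝ,
      (∀ t ≥ (0:ℝ), ∀ i j, HasDerivAt (fun s => Z s i j)
          (-α * (w i * ∑ k, L i k * Z t k j) - (if i = j then bF (Z t) i else 0)) t) →
      ∀ t ≥ (0:ℝ),
        mnorm (Z t - Matrix.of (fun _ j => zstar j)) ≤
          κ * Real.exp (-ν * t) * mnorm (Z 0 - Matrix.of (fun _ j => zstar j)) :=
  nash_seeking_rescaled_general N hN a L ha_diag hLdef w hbal F bF hbF lunder lbar lF hlunder hlbar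
    hmono hFlip hbFlip lam2' hlam2' hlam2'spec zstar hzstar α hα
end

section
/- Let L ∈ ℝ^{N×N} be the Laplacian of a strongly connected weighted digraph, and let ξ ∈ ℝ^N be the vector with ξᵀL = 0 and ξᵀ1 = 1. Then there exist constants c > 0 and β > 0 such that ‖exp(−tL) − 1 ξᵀ‖ ≤ c e^{−β t} for all t ≥ 0, where 1 ξᵀ is the rank-one matrix with (i,j) entry ξ_j. In particular, every solution of θ̇(t) = −L θ(t) converges exponentially to (ξᵀθ(0)) 1 as t → ∞. -/
open scoped BigOperators

/-!
Write `Q = -L`: its off-diagonal entries are nonnegative and its rows sum to zero. Hence for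
`t ≥ 0` the matrix `exp (t Q) = e^{-t d} exp (t (Q + d))` is row stochastic, and strong
connectivity makes every entry of `exp Q` positive, say at least `ε`. Such a matrix contracts the
oscillation `max x - min x` by the factor `1 - N ε` (Doeblin), so by the semigroup property the
oscillation of `exp (t Q) x` decays like `q ^ ⌊t⌋`. As `ξᵀ exp (t Q) = ξᵀ` and `ξᵀ 1 = 1`, each
coordinate of `exp (t Q) x` lies within `(∑ |ξ k|) · osc (exp (t Q) x)` of `ξᵀ x`. Unit vectors
`x` give the bound on `exp (-t L) - 1 ξᵀ`; `x = θ 0` gives the bound on the ODE, whose solution is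
`exp (-t L) θ 0` by uniqueness.
-/

open Finset NormedSpace

namespace Matrix

variable {ι : Type*} [Fintype ι] [DecidableEq ι]

theorem exp_mulVec_eq_self {A : Matrix ι ι ℝ} {v : ι → ℝ} (h : A *ᵥ v = 0) :
    exp A *ᵥ v = v := by
  -- `v 1ᵀ` intertwines `0` and `A`, hence also `exp 0 = 1` and `exp A`.
  have hsemi : SemiconjBy (vecMulVec v 1) 0 A := by
    rw [SemiconjBy, mul_zero, mul_vecMulVec, h, zero_vecMulVec]
  have hexp : vecMulVec v 1 * exp (0 : Matrix ι ι ℝ) = exp A * vecMulVec v 1 := by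
    open scoped Norms.Operator in exact hsemi.exp_right
  rw [exp_zero, mul_one, mul_vecMulVec] at hexp
  funext i
  simpa [vecMulVec] using (congrFun (congrFun hexp i) i).symm

theorem vecMul_exp_eq_self {A : Matrix ι ι ℝ} {v : ι → ℝ} (h : v ᵥ* A = 0) :
    v ᵥ* exp A = v := by
  rw [← mulVec_transpose, ← exp_transpose]
  exact exp_mulVec_eq_self (by rwa [mulVec_transpose])

theorem exp_smul_add (Q : Matrix ι ι ℝ) (s t : ℝ) :
    exp ((s + t) • Q) = exp (s • Q) * exp (t • Q) := by
  rw [add_smul, exp_add_of_commute]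
  exact ((Commute.refl Q).smul_left s).smul_right t

theorem exp_natCast_smul (Q : Matrix ι ι ℝ) (n : ℕ) : exp ((n : ℝ) • Q) = exp Q ^ n := by
  rw [Nat.cast_smul_eq_nsmul, exp_nsmul]

theorem exp_smul_one (c : ℝ) : exp (c • (1 : Matrix ι ι ℝ)) = Real.exp c • 1 := by
  rw [smul_one_eq_diagonal, exp_diagonal, smul_one_eq_diagonal, Real.exp_eq_exp_ℝ]
  simp [Pi.exp_def]

theorem exp_eq_exp_neg_smul_exp_add_smul_one (A : Matrix ι ι ℝ) (d : ℝ) :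
    exp A = Real.exp (-d) • exp (A + d • 1) := by
  have hA : A = (-d) • 1 + (A + d • 1) := by module
  conv_lhs => rw [hA]
  rw [exp_add_of_commute _ _ ((Commute.one_left _).smul_left _), exp_smul_one, smul_one_mul]

theorem hasSum_exp_apply (A : Matrix ι ι ℝ) (i j : ι) :
    HasSum (fun n => ((n.factorial : ℝ)⁻¹) * (A ^ n) i j) (exp A i j) := by
  open scoped Norms.Operator in
  exact (exp_series_hasSum_exp' (𝕂 := ℝ) A).map (entryLinearMap ℝ ℝ i j)
    ((continuous_apply j).comp (continuous_apply i))

theorem exp_apply_nonneg {B : Matrix ι ι ℝ} (hB : ∀ i j, 0 ≤ B i j) (i j : ι) :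
    0 ≤ exp B i j :=
  (hasSum_exp_apply B i j).nonneg fun n => mul_nonneg (by positivity) (pow_apply_nonneg hB n i j)

theorem inv_factorial_mul_pow_apply_le_exp_apply {B : Matrix ι ι ℝ} (hB : ∀ i j, 0 ≤ B i j)
    (n : ℕ) (i j : ι) : (n.factorial : ℝ)⁻¹ * (B ^ n) i j ≤ exp B i j :=
  le_hasSum (hasSum_exp_apply B i j) n fun m _ =>
    mul_nonneg (by positivity) (pow_apply_nonneg hB m i j)

/-- Cut form of strong connectivity of the digraph with an edge `i → j` whenever `0 < A i j`. -/
def IsStronglyConnected (A : Matrix ι ι ℝ) : Prop :=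
  ∀ S : Finset ι, S.Nonempty → S ≠ univ → ∃ i ∈ S, ∃ j ∉ S, 0 < A i j

theorem IsStronglyConnected.exists_pow_apply_pos {B : Matrix ι ι ℝ}
    (hconn : B.IsStronglyConnected) (hB : ∀ i j, 0 ≤ B i j) (i j : ι) :
    ∃ n, 0 < (B ^ n) i j := by
  classical
  set S := univ.filter fun j => ∃ n, 0 < (B ^ n) i j
  have hiS : i ∈ S := mem_filter.2 ⟨mem_univ i, 0, by simp⟩
  suffices S = univ by simpa [S] using this.ge (mem_univ j)
  by_contra hS
  obtain ⟨k, hk, l, hl, hkl⟩ := hconn S ⟨i, hiS⟩ hS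
  obtain ⟨n, hn⟩ : ∃ n, 0 < (B ^ n) i k := by simpa [S] using hk
  refine hl (mem_filter.2 ⟨mem_univ l, n + 1, ?_⟩)
  rw [pow_succ, mul_apply]
  exact (mul_pos hn hkl).trans_le <| single_le_sum (f := fun m => (B ^ n) i m * B m l)
    (fun m _ => mul_nonneg (pow_apply_nonneg hB n i m) (hB m l)) (mem_univ k)

theorem exists_add_smul_one_nonneg {A : Matrix ι ι ℝ} (hA : ∀ i j, i ≠ j → 0 ≤ A i j) :
    ∃ d : ℝ, ∀ i j, 0 ≤ (A + d • 1) i j := by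
  refine ⟨∑ k, |A k k|, fun i j => ?_⟩
  rcases eq_or_ne i j with rfl | hij
  · have := single_le_sum (f := fun k => |A k k|) (fun k _ => abs_nonneg _) (mem_univ i)
    simp only [add_apply, smul_apply, one_apply_eq, smul_eq_mul, mul_one]
    linarith [neg_abs_le (A i i)]
  · simpa [one_apply_ne hij] using hA i j hij

theorem exp_apply_nonneg_of_offDiag_nonneg {A : Matrix ι ι ℝ}
    (hA : ∀ i j, i ≠ j → 0 ≤ A i j) (i j : ι) : 0 ≤ exp A i j := by
  obtain ⟨d, hd⟩ := exists_add_smul_one_nonneg hA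
  rw [exp_eq_exp_neg_smul_exp_add_smul_one A d, smul_apply, smul_eq_mul]
  exact mul_nonneg (Real.exp_pos _).le (exp_apply_nonneg hd i j)

theorem IsStronglyConnected.exp_apply_pos {A : Matrix ι ι ℝ} (hconn : A.IsStronglyConnected)
    (hA : ∀ i j, i ≠ j → 0 ≤ A i j) (i j : ι) : 0 < exp A i j := by
  obtain ⟨d, hd⟩ := exists_add_smul_one_nonneg hA
  have hconn' : (A + d • 1).IsStronglyConnected := fun S hne hS => by
    obtain ⟨k, hk, l, hl, hkl⟩ := hconn S hne hS
    have hkl' : k ≠ l := by rintro rfl; exact hl hk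
    exact ⟨k, hk, l, hl, by simpa [one_apply_ne hkl'] using hkl⟩
  obtain ⟨n, hn⟩ := hconn'.exists_pow_apply_pos hd i j
  rw [exp_eq_exp_neg_smul_exp_add_smul_one A d, smul_apply, smul_eq_mul]
  exact mul_pos (Real.exp_pos _) <|
    (mul_pos (by positivity) hn).trans_le (inv_factorial_mul_pow_apply_le_exp_apply hd n i j)

theorem hasDerivAt_exp_smul_mulVec (A : Matrix ι ι ℝ) (v : ι → ℝ) (t : ℝ) :
    HasDerivAt (fun s : ℝ => exp (s • A) *ᵥ v) (A *ᵥ (exp (t • A) *ᵥ v)) t := by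
  open scoped Norms.Operator in
  have h := (((mulVecBilin ℝ ℝ).flip v).toContinuousLinearMap.hasFDerivAt).comp_hasDerivAt t
    (hasDerivAt_exp_smul_const' (𝕂 := ℝ) A t)
  rw [mulVec_mulVec]
  exact h

theorem eq_exp_smul_mulVec_of_hasDerivAt {A : Matrix ι ι ℝ} {θ : ℝ → ι → ℝ}
    (hθ : ∀ t ≥ 0, HasDerivAt θ (A *ᵥ θ t) t) {t : ℝ} (ht : 0 ≤ t) :
    θ t = exp (t • A) *ᵥ θ 0 := by
  refine ODE_solution_unique_of_mem_Icc_right (v := fun _ y => A *ᵥ y) (s := fun _ => Set.univ)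
    (fun _ _ => (mulVecLin A).toContinuousLinearMap.lipschitz.lipschitzOnWith)
    (fun s hs => (hθ s hs.1).continuousAt.continuousWithinAt)
    (fun s hs => (hθ s hs.1).hasDerivWithinAt) (fun _ _ => trivial)
    (fun s _ => (hasDerivAt_exp_smul_mulVec A (θ 0) s).continuousAt.continuousWithinAt)
    (fun s _ => (hasDerivAt_exp_smul_mulVec A (θ 0) s).hasDerivWithinAt) (fun _ _ => trivial)
    (by simp) ⟨ht, le_rfl⟩

end Matrix

open Matrix

theorem Matrix.mulVec_apply_le_of_le {ι : Type*} [Fintype ι] {M : Matrix ι ι ℝ} {ε : ℝ}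
    (hM : M *ᵥ 1 = 1) (hε : ∀ i j, ε ≤ M i j) {x : ι → ℝ} {c : ℝ}
    (hx : ∀ j, x j ≤ c) (i : ι) :
    (M *ᵥ x) i ≤ ε * ∑ j, x j + (1 - Fintype.card ι * ε) * c := by
  have hrow : ∑ j, M i j = 1 := by simpa [mulVec, dotProduct] using congrFun hM i
  calc (M *ᵥ x) i = ε * ∑ j, x j + ∑ j, (M i j - ε) * x j := by
        simp only [mulVec, dotProduct, sub_mul, sum_sub_distrib, mul_sum]; ring
    _ ≤ ε * ∑ j, x j + ∑ j, (M i j - ε) * c := by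
        gcongr with j
        · exact sub_nonneg.2 (hε i j)
        · exact hx j
    _ = ε * ∑ j, x j + (1 - Fintype.card ι * ε) * c := by
        rw [← sum_mul, sum_sub_distrib, hrow]; simp

section Oscillation

variable {ι : Type*} [Fintype ι] [Nonempty ι]

noncomputable def osc (x : ι → ℝ) : ℝ := univ.sup' univ_nonempty x - univ.inf' univ_nonempty x

theorem sub_le_osc (x : ι → ℝ) (i k : ι) : x i - x k ≤ osc x :=
  sub_le_sub (le_sup' x (mem_univ i)) (inf'_le x (mem_univ k))

theorem abs_sub_le_osc (x : ι → ℝ) (i k : ι) : |x i - x k| ≤ osc x :=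
  abs_sub_le_iff.2 ⟨sub_le_osc x i k, sub_le_osc x k i⟩

theorem osc_nonneg (x : ι → ℝ) : 0 ≤ osc x :=
  (abs_nonneg _).trans (abs_sub_le_osc x (Classical.arbitrary ι) (Classical.arbitrary ι))

theorem osc_le_of_mem_Icc {x : ι → ℝ} {a b : ℝ} (h : ∀ i, x i ∈ Set.Icc a b) : osc x ≤ b - a :=
  sub_le_sub (sup'_le _ _ fun i _ => (h i).2) (le_inf' _ _ fun i _ => (h i).1)

theorem abs_sub_dotProduct_le_osc {w : ι → ℝ} (hw : ∑ k, w k = 1) (y : ι → ℝ) (i : ι) :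
    |y i - w ⬝ᵥ y| ≤ (∑ k, |w k|) * osc y := by
  have hsplit : y i - w ⬝ᵥ y = ∑ k, w k * (y i - y k) := by
    simp only [dotProduct, mul_sub, sum_sub_distrib, ← sum_mul, hw, one_mul]
  calc |y i - w ⬝ᵥ y| ≤ ∑ k, |w k| * |y i - y k| := by
        rw [hsplit]
        simpa only [abs_mul] using abs_sum_le_sum_abs (fun k => w k * (y i - y k)) univ
    _ ≤ ∑ k, |w k| * osc y := by gcongr with k; exact abs_sub_le_osc y i k
    _ = (∑ k, |w k|) * osc y := (sum_mul ..).symm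

variable {M : Matrix ι ι ℝ}

theorem osc_mulVec_le {ε : ℝ} (hM : M *ᵥ 1 = 1) (hε : ∀ i j, ε ≤ M i j) (x : ι → ℝ) :
    osc (M *ᵥ x) ≤ (1 - Fintype.card ι * ε) * osc x := by
  set hi := univ.sup' univ_nonempty x
  set lo := univ.inf' univ_nonempty x
  have hle := mulVec_apply_le_of_le hM hε (x := x) (c := hi) fun j => le_sup' x (mem_univ j)
  have hge := mulVec_apply_le_of_le hM hε (x := -x) (c := -lo) fun j =>
    neg_le_neg (inf'_le x (mem_univ j))
  simp only [mulVec_neg, Pi.neg_apply, sum_neg_distrib] at hge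
  calc osc (M *ᵥ x)
      ≤ (ε * ∑ j, x j + (1 - Fintype.card ι * ε) * hi)
        - (ε * ∑ j, x j + (1 - Fintype.card ι * ε) * lo) :=
        osc_le_of_mem_Icc fun i => ⟨by linarith [hge i], hle i⟩
    _ = (1 - Fintype.card ι * ε) * osc x := by simp only [osc, hi, lo]; ring

theorem osc_pow_mulVec_le [DecidableEq ι] {q : ℝ} (hq : 0 ≤ q)
    (hM : ∀ y, osc (M *ᵥ y) ≤ q * osc y) (n : ℕ) (x : ι → ℝ) :
    osc ((M ^ n) *ᵥ x) ≤ q ^ n * osc x := by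
  induction n generalizing x with
  | zero => simp
  | succ n ih =>
    rw [pow_succ, ← mulVec_mulVec, pow_succ, mul_assoc]
    exact ih _ |>.trans (mul_le_mul_of_nonneg_left (hM x) (pow_nonneg hq n))

theorem abs_apply_sub_le_of_abs_mulVec_sub_le [DecidableEq ι] {w : ι → ℝ} {K : ℝ} (hK : 0 ≤ K)
    (h : ∀ x i, |(M *ᵥ x) i - w ⬝ᵥ x| ≤ K * osc x) (i j : ι) : |M i j - w j| ≤ K := by
  have hosc : osc (Pi.single j 1 : ι → ℝ) ≤ 1 := by
    simpa using osc_le_of_mem_Icc (a := 0) (b := 1) fun k => by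
      by_cases hk : k = j <;> simp [hk]
  simpa [mulVec_single_one, dotProduct_single_one] using
    (h (Pi.single j 1) i).trans (mul_le_of_le_one_right hK hosc)

end Oscillation

theorem pow_floor_le_inv_mul_exp {q : ℝ} (hq0 : 0 < q) (hq1 : q ≤ 1) (t : ℝ) :
    q ^ ⌊t⌋₊ ≤ q⁻¹ * Real.exp (Real.log q * t) :=
  calc q ^ ⌊t⌋₊ = q ^ (⌊t⌋₊ : ℝ) := (Real.rpow_natCast q _).symm
    _ ≤ q ^ (t - 1) :=
      Real.rpow_le_rpow_of_exponent_ge hq0 hq1 (by linarith [Nat.lt_floor_add_one t])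
    _ = q⁻¹ * Real.exp (Real.log q * t) := by
      rw [Real.rpow_sub hq0, Real.rpow_one, Real.rpow_def_of_pos hq0, div_eq_inv_mul]

section RateMatrix

variable {ι : Type*} [Fintype ι] [DecidableEq ι] {Q : Matrix ι ι ℝ}

theorem exp_smul_mem_rowStochastic (hQ : ∀ i j, i ≠ j → 0 ≤ Q i j) (hQ1 : Q *ᵥ 1 = 0) {t : ℝ}
    (ht : 0 ≤ t) : exp (t • Q) ∈ rowStochastic ℝ ι :=
  ⟨exp_apply_nonneg_of_offDiag_nonneg fun i j hij => mul_nonneg ht (hQ i j hij),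
    exp_mulVec_eq_self (by rw [smul_mulVec, hQ1, smul_zero])⟩

variable [Nonempty ι]

theorem exists_osc_exp_smul_mulVec_le (hQ : ∀ i j, i ≠ j → 0 ≤ Q i j) (hQ1 : Q *ᵥ 1 = 0)
    (hconn : Q.IsStronglyConnected) :
    ∃ β > 0, ∃ C > 0, ∀ t ≥ 0, ∀ x, osc (exp (t • Q) *ᵥ x) ≤ C * Real.exp (-β * t) * osc x := by
  set P := exp Q
  have hP := exp_smul_mem_rowStochastic hQ hQ1 zero_le_one
  rw [one_smul] at hP
  obtain ⟨p, hp⟩ := Finite.exists_min fun p : ι × ι => P p.1 p.2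
  set ε := P p.1 p.2
  have hε : 0 < ε := hconn.exp_apply_pos hQ p.1 p.2
  -- `1 - card ι * ε` may vanish; the cap keeps `q` positive, as `log q` is needed.
  set q := max (1 - Fintype.card ι * ε) (1 / 2)
  have hq0 : 0 < q := lt_max_of_lt_right one_half_pos
  have hq1 : q < 1 := max_lt (by
    have : (0 : ℝ) < Fintype.card ι := by exact_mod_cast Fintype.card_pos
    nlinarith) (by norm_num)
  have hPq : ∀ y, osc (P *ᵥ y) ≤ q * osc y := fun y =>
    (osc_mulVec_le hP.2 (fun i j => hp (i, j)) y).trans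
      (mul_le_mul_of_nonneg_right (le_max_left _ _) (osc_nonneg y))
  refine ⟨-Real.log q, neg_pos.2 (Real.log_neg hq0 hq1), q⁻¹, inv_pos.2 hq0, fun t ht x => ?_⟩
  have hsplit : exp (t • Q) = exp ((t - ⌊t⌋₊) • Q) * P ^ ⌊t⌋₊ := by
    rw [← exp_natCast_smul, ← exp_smul_add, sub_add_cancel]
  have hfrac := exp_smul_mem_rowStochastic hQ hQ1 (sub_nonneg.2 (Nat.floor_le ht))
  calc osc (exp (t • Q) *ᵥ x) ≤ osc (P ^ ⌊t⌋₊ *ᵥ x) := by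
        rw [hsplit, ← mulVec_mulVec]
        simpa using osc_mulVec_le hfrac.2 hfrac.1 (P ^ ⌊t⌋₊ *ᵥ x)
    _ ≤ q ^ ⌊t⌋₊ * osc x := osc_pow_mulVec_le hq0.le hPq _ x
    _ ≤ q⁻¹ * Real.exp (- -Real.log q * t) * osc x := by
        rw [neg_neg]
        exact mul_le_mul_of_nonneg_right (pow_floor_le_inv_mul_exp hq0 hq1.le t) (osc_nonneg x)

theorem exists_abs_exp_smul_mulVec_sub_le (hQ : ∀ i j, i ≠ j → 0 ≤ Q i j) (hQ1 : Q *ᵥ 1 = 0)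
    (hconn : Q.IsStronglyConnected) {ξ : ι → ℝ} (hξQ : ξ ᵥ* Q = 0) (hξ1 : ∑ k, ξ k = 1) :
    ∃ β > 0, ∃ C ≥ 0, ∀ t ≥ 0, ∀ x i,
      |(exp (t • Q) *ᵥ x) i - ξ ⬝ᵥ x| ≤ C * Real.exp (-β * t) * osc x := by
  obtain ⟨β, hβ, C, hC, hosc⟩ := exists_osc_exp_smul_mulVec_le hQ hQ1 hconn
  refine ⟨β, hβ, (∑ k, |ξ k|) * C, by positivity, fun t ht x i => ?_⟩
  have hξ : ξ ⬝ᵥ (exp (t • Q) *ᵥ x) = ξ ⬝ᵥ x := by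
    rw [dotProduct_mulVec, vecMul_exp_eq_self (by rw [vecMul_smul, hξQ, smul_zero])]
  calc |(exp (t • Q) *ᵥ x) i - ξ ⬝ᵥ x|
      ≤ (∑ k, |ξ k|) * osc (exp (t • Q) *ᵥ x) := hξ ▸ abs_sub_dotProduct_le_osc hξ1 _ i
    _ ≤ (∑ k, |ξ k|) * (C * Real.exp (-β * t) * osc x) := by gcongr; exact hosc t ht x
    _ = (∑ k, |ξ k|) * C * Real.exp (-β * t) * osc x := by ring

end RateMatrix

theorem vnorm_le_of_abs_le {N : ℕ} {x : Fin N → ℝ} {K : ℝ} (hK : 0 ≤ K) (h : ∀ i, |x i| ≤ K) :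
    vnorm x ≤ √N * K :=
  calc vnorm x ≤ √(∑ _i : Fin N, K ^ 2) :=
        Real.sqrt_le_sqrt <| sum_le_sum fun i _ => sq_le_sq' (abs_le.1 (h i)).1 (abs_le.1 (h i)).2
    _ = √N * K := by simp [Real.sqrt_mul, Real.sqrt_sq hK]

theorem mnorm_le_of_abs_le {N : ℕ} {A : Matrix (Fin N) (Fin N) ℝ} {K : ℝ} (hK : 0 ≤ K)
    (h : ∀ i j, |A i j| ≤ K) : mnorm A ≤ N * K :=
  calc mnorm A ≤ √(∑ _i : Fin N, ∑ _j : Fin N, K ^ 2) :=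
        Real.sqrt_le_sqrt <| sum_le_sum fun i _ => sum_le_sum fun j _ =>
          sq_le_sq' (abs_le.1 (h i j)).1 (abs_le.1 (h i j)).2
    _ = N * K := by
        rw [← Real.sqrt_sq (by positivity : 0 ≤ (N : ℝ) * K)]
        congr 1
        simp only [sum_const, card_univ, Fintype.card_fin, nsmul_eq_mul]
        ring

section Laplacian

variable {ι : Type*} [Fintype ι] [DecidableEq ι]

def laplacian (a : ι → ι → ℝ) : Matrix ι ι ℝ := diagonal (fun i => ∑ k, a i k) - of a

theorem eq_laplacian {a : ι → ι → ℝ} {L : Matrix ι ι ℝ} (ha_diag : ∀ i, a i i = 0)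
    (hL : ∀ i j, L i j = if i = j then ∑ k, a i k else -(a i j)) : L = laplacian a := by
  ext i j
  rcases eq_or_ne i j with rfl | hij
  · simp [laplacian, hL, ha_diag]
  · simp [laplacian, hL, hij]

theorem laplacian_mulVec_one (a : ι → ι → ℝ) : laplacian a *ᵥ 1 = 0 := by
  ext i; simp [laplacian, mulVec, dotProduct, diagonal_apply]

theorem neg_laplacian_apply_nonneg {a : ι → ι → ℝ} (ha : ∀ i j, 0 ≤ a i j) {i j : ι}
    (hij : i ≠ j) : 0 ≤ (-laplacian a) i j := by
  simp [laplacian, hij, ha]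

theorem isStronglyConnected_neg_laplacian {a : ι → ι → ℝ}
    (hconn : ∀ S : Finset ι, S.Nonempty → S ≠ univ → ∃ i ∈ S, ∃ j, j ∉ S ∧ 0 < a i j) :
    (-laplacian a).IsStronglyConnected := fun S hne hS => by
  obtain ⟨i, hi, j, hj, hij⟩ := hconn S hne hS
  exact ⟨i, hi, j, hj, by simpa [laplacian, ne_of_mem_of_not_mem hi hj] using hij⟩

end Laplacian

/-- For the Laplacian `L` of a strongly connected weighted digraph with
normalized left eigenvector `ξ` (`ξᵀL = 0`, `ξᵀ1 = 1`), `exp(−tL)` converges exponentially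
to the rank-one matrix `1ξᵀ`; in particular every solution of `θ̇ = −Lθ` converges
exponentially to `(ξᵀθ(0)) 1`. -/
theorem exp_neg_laplacian_converges
    (N : ℕ) (hN : 1 ≤ N)
    -- the weighted digraph and its Laplacian
    (a : Fin N → Fin N → ℝ) (L : Matrix (Fin N) (Fin N) ℝ)
    (ha_nonneg : ∀ i j, 0 ≤ a i j) (ha_diag : ∀ i, a i i = 0)
    (hLdef : ∀ i j, L i j = if i = j then ∑ k, a i k else -(a i j))
    -- strongly connected (irreducible adjacency matrix)
    (hconn : ∀ S : Finset (Fin N), S.Nonempty → S ≠ Finset.univ →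
      ∃ i ∈ S, ∃ j, j ∉ S ∧ 0 < a i j)
    -- the normalized left eigenvector: ξᵀL = 0, ξᵀ1 = 1
    (xi : Fin N → ℝ)
    (hxiL : ∀ j, ∑ k, xi k * L k j = 0) (hxi1 : ∑ k, xi k = 1) :
    -- exponential convergence of exp(−tL) to 1ξᵀ
    (∃ c > (0:ℝ), ∃ β > (0:ℝ), ∀ t ≥ (0:ℝ),
      mnorm (NormedSpace.exp ((-t) • L) - Matrix.of (fun _ j => xi j)) ≤
        c * Real.exp (-β * t)) ∧
    -- in particular: every solution of θ̇ = −Lθ converges exponentially to (ξᵀθ(0)) 1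
    (∀ θ : ℝ → (Fin N → ℝ),
      (∀ t ≥ (0:ℝ), ∀ i, HasDerivAt (fun s => θ s i) (-(∑ k, L i k * θ t k)) t) →
      ∃ c > (0:ℝ), ∃ β > (0:ℝ), ∀ t ≥ (0:ℝ),
        vnorm (θ t - fun _ => ∑ k, xi k * θ 0 k) ≤ c * Real.exp (-β * t)) := by
  have : Nonempty (Fin N) := ⟨⟨0, hN⟩⟩
  obtain rfl : L = laplacian a := eq_laplacian ha_diag hLdef
  have hξ : xi ᵥ* -laplacian a = 0 := by ext j; simpa [vecMul, dotProduct] using hxiL j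
  obtain ⟨β, hβ, C, hC, hbound⟩ := exists_abs_exp_smul_mulVec_sub_le
    (fun _ _ => neg_laplacian_apply_nonneg ha_nonneg)
    (by rw [neg_mulVec, laplacian_mulVec_one, neg_zero])
    (isStronglyConnected_neg_laplacian hconn) hξ hxi1
  refine ⟨⟨N * C + 1, by positivity, β, hβ, fun t ht => ?_⟩, fun θ hθ => ?_⟩
  · calc _ ≤ N * (C * Real.exp (-β * t)) := by
          refine mnorm_le_of_abs_le (by positivity) fun i j => ?_
          simpa using abs_apply_sub_le_of_abs_mulVec_sub_le
            (by positivity) (hbound t ht) i j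
      _ ≤ (N * C + 1) * Real.exp (-β * t) := by nlinarith [Real.exp_pos (-β * t)]
  · have hsol : ∀ t ≥ 0, θ t = exp (t • -laplacian a) *ᵥ θ 0 := fun t ht =>
      eq_exp_smul_mulVec_of_hasDerivAt (fun s hs => hasDerivAt_pi.2 fun i => by
        simpa [neg_mulVec, mulVec, dotProduct] using hθ s hs i) ht
    have hosc := osc_nonneg (θ 0)
    refine ⟨√N * (C * osc (θ 0)) + 1, by positivity, β, hβ, fun t ht => ?_⟩
    calc _ ≤ √N * (C * Real.exp (-β * t) * osc (θ 0)) := by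
          refine vnorm_le_of_abs_le (by positivity) fun i => ?_
          simpa [hsol t ht, dotProduct] using hbound t ht (θ 0) i
      _ ≤ (√N * (C * osc (θ 0)) + 1) * Real.exp (-β * t) := by
          nlinarith [Real.exp_pos (-β * t), Real.sqrt_nonneg N]
end
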